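/- Let (L, ∘_λ) be a commutative associative conformal superalgebra and (L, [·_λ ·]) a Lie conformal superalgebra on the same ℤ₂-graded ℂ[∂]-module. Then (L, ∘_λ, [·_λ ·]) is simultaneously a Poisson conformal superalgebra and a transposed Poisson conformal superalgebra if and only if for all homogeneous a, b, c ∈ L: a ∘_λ [b_μ c] = 0, [b_{μ−λ} a] ∘_μ c = 0, and [(a ∘_λ b)_{λ+μ} c] = 0. -/

import Mathlib

open Polynomial
open scoped TensorProduct

noncomputable section

namespace TPCSAFormal

/-- The super-sign `(-1)^{i·j}` for parities `i, j ∈ ℤ/2ℤ`. -/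
def sgn (i j : ZMod 2) : ℂ := (-1 : ℂ) ^ (i.val * j.val)

variable (L : Type*) [AddCommGroup L] [Module ℂ L]
  [Module (Polynomial ℂ) L] [IsScalarTower ℂ (Polynomial ℂ) L]

/-- A conformal `λ`-product on the `ℂ[∂]`-module `L`, recorded by its family of `n`-th
product coefficients: `a ∘_λ b = ∑_n λ^n • coeff n a b`, with finitely many nonzero terms.
This is exactly the data of a `ℂ`-bilinear map `L ⊗ L → ℂ[λ] ⊗ L`. -/
structure ConformalProduct where
  coeff : ℕ → L →ₗ[ℂ] L →ₗ[ℂ] L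
  coeff_finite : ∀ a b : L, ∃ N : ℕ, ∀ n : ℕ, N ≤ n → coeff n a b = 0

variable {L}

/-- The value `a ∘_λ b` of the `λ`-product at `λ ∈ ℂ`.  Since `ℂ` is infinite, identities
between such values for all `λ` are equivalent to the corresponding polynomial identities. -/
def ConformalProduct.mul (m : ConformalProduct L) (lam : ℂ) (a b : L) : L :=
  ∑ᶠ n : ℕ, lam ^ n • m.coeff n a b

/-- The value `a ∘_{-∂-λ} b`, where `∂` acts on `L` as scalar multiplication by
`X ∈ ℂ[∂]` (the variable `λ` being replaced by the operator `-∂-λ`). -/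
def ConformalProduct.cmul (m : ConformalProduct L) (lam : ℂ) (a b : L) : L :=
  ∑ᶠ n : ℕ, ((-((X : Polynomial ℂ) + C lam)) ^ n) • m.coeff n a b

variable (L) in
/-- A `ℤ₂`-grading on `L` making it a `ℤ₂`-graded `ℂ[∂]`-module: `L = L₀ ⊕ L₁` with
`∂ L_i ⊆ L_i`, where `∂` acts as multiplication by `X ∈ ℂ[∂]`. -/
structure SuperModule where
  grade : ZMod 2 → Submodule ℂ L
  isInternal : DirectSum.IsInternal grade
  X_smul_mem : ∀ (i : ZMod 2) (a : L), a ∈ grade i → (X : Polynomial ℂ) • a ∈ grade i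

/-- `m` is an even `λ`-product on the `ℤ₂`-graded `ℂ[∂]`-module `(L, S)`:
it is even with respect to the grading and conformally sesquilinear. -/
structure IsLambdaProduct (S : SuperModule L) (m : ConformalProduct L) : Prop where
  even : ∀ (i j : ZMod 2) (a b : L), a ∈ S.grade i → b ∈ S.grade j →
    ∀ n : ℕ, m.coeff n a b ∈ S.grade (i + j)
  sesq_left : ∀ (lam : ℂ) (a b : L),
    m.mul lam ((X : Polynomial ℂ) • a) b = (-lam) • m.mul lam a b
  sesq_right : ∀ (lam : ℂ) (a b : L),
    m.mul lam a ((X : Polynomial ℂ) • b) =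
      (X : Polynomial ℂ) • m.mul lam a b + lam • m.mul lam a b

/-- `(L, S, m)` is a commutative associative conformal superalgebra. -/
structure IsCommAssoc (S : SuperModule L) (m : ConformalProduct L)
    extends IsLambdaProduct S m : Prop where
  comm : ∀ (i j : ZMod 2) (a b : L), a ∈ S.grade i → b ∈ S.grade j →
    ∀ lam : ℂ, m.mul lam a b = sgn i j • m.cmul lam b a
  assoc : ∀ (lam mu : ℂ) (a b c : L),
    m.mul lam a (m.mul mu b c) = m.mul (lam + mu) (m.mul lam a b) c

/-- `(L, S, br)` is a Lie conformal superalgebra. -/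
structure IsLie (S : SuperModule L) (br : ConformalProduct L)
    extends IsLambdaProduct S br : Prop where
  skew : ∀ (i j : ZMod 2) (a b : L), a ∈ S.grade i → b ∈ S.grade j →
    ∀ lam : ℂ, br.mul lam a b = -(sgn i j • br.cmul lam b a)
  jacobi : ∀ (i j : ZMod 2) (a b : L), a ∈ S.grade i → b ∈ S.grade j →
    ∀ (c : L) (lam mu : ℂ),
      br.mul lam a (br.mul mu b c) =
        br.mul (lam + mu) (br.mul lam a b) c + sgn i j • br.mul mu b (br.mul lam a c)

/-- `(L, S, m, br)` is a transposed Poisson conformal superalgebra. -/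
structure IsTPCSA (S : SuperModule L) (m br : ConformalProduct L) : Prop where
  commAssoc : IsCommAssoc S m
  lie : IsLie S br
  transposedLeibniz : ∀ (i j : ZMod 2) (a b : L), a ∈ S.grade i → b ∈ S.grade j →
    ∀ (c : L) (lam mu : ℂ),
      (2 : ℂ) • m.mul lam a (br.mul mu b c) =
        br.mul (lam + mu) (m.mul lam a b) c + sgn i j • br.mul mu b (m.mul lam a c)

/-- `(L, S, m, br)` is a Poisson conformal superalgebra. -/
structure IsPCSA (S : SuperModule L) (m br : ConformalProduct L) : Prop where
  commAssoc : IsCommAssoc S m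
  lie : IsLie S br
  leibniz : ∀ (i j : ZMod 2) (a b : L), a ∈ S.grade i → b ∈ S.grade j →
    ∀ (c : L) (lam mu : ℂ),
      br.mul lam a (m.mul mu b c) =
        m.mul (lam + mu) (br.mul lam a b) c + sgn i j • m.mul mu b (br.mul lam a c)

/-- `(L, S, br, α)` is a Hom-Lie conformal superalgebra. -/
structure IsHomLie (S : SuperModule L) (br : ConformalProduct L) (α : L → L)
    extends IsLambdaProduct S br : Prop where
  map_smul_add : ∀ (c : ℂ) (a b : L), α (c • a + b) = c • α a + α b
  map_grade : ∀ (i : ZMod 2) (a : L), a ∈ S.grade i → α a ∈ S.grade i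
  commute_partial : ∀ a : L, α ((X : Polynomial ℂ) • a) = (X : Polynomial ℂ) • α a
  skew : ∀ (i j : ZMod 2) (a b : L), a ∈ S.grade i → b ∈ S.grade j →
    ∀ lam : ℂ, br.mul lam a b = -(sgn i j • br.cmul lam b a)
  homJacobi : ∀ (i j : ZMod 2) (a b : L), a ∈ S.grade i → b ∈ S.grade j →
    ∀ (c : L) (lam mu : ℂ),
      br.mul lam (α a) (br.mul mu b c) =
        br.mul (lam + mu) (br.mul lam a b) (α c) + sgn i j • br.mul mu (α b) (br.mul lam a c)

/-- `(L, S, p)` is a left-symmetric conformal superalgebra. -/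
structure IsLeftSymmetric (S : SuperModule L) (p : ConformalProduct L)
    extends IsLambdaProduct S p : Prop where
  leftSym : ∀ (i j : ZMod 2) (a b : L), a ∈ S.grade i → b ∈ S.grade j →
    ∀ (c : L) (lam mu : ℂ),
      p.mul (lam + mu) (p.mul lam a b) c - p.mul lam a (p.mul mu b c) =
        sgn i j • (p.mul (lam + mu) (p.mul mu b a) c - p.mul mu b (p.mul lam a c))

/-- `(L, S, p)` is a (left) Novikov conformal superalgebra. -/
structure IsNovikov (S : SuperModule L) (p : ConformalProduct L)
    extends IsLeftSymmetric S p : Prop where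
  novikov : ∀ (j k : ZMod 2) (b c : L), b ∈ S.grade j → c ∈ S.grade k →
    ∀ (a : L) (lam mu : ℂ),
      p.mul (lam + mu) (p.mul lam a b) c = sgn j k • p.cmul mu (p.mul lam a c) b

/-- `(L, S, mc, p)` is a Novikov-Poisson conformal superalgebra. -/
structure IsNovikovPoisson (S : SuperModule L) (mc p : ConformalProduct L) : Prop where
  commAssoc : IsCommAssoc S mc
  novikov : IsNovikov S p
  compat₁ : ∀ (lam mu : ℂ) (a b c : L),
    p.mul (lam + mu) (mc.mul lam a b) c = mc.mul lam a (p.mul mu b c)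
  compat₂ : ∀ (i j : ZMod 2) (a b : L), a ∈ S.grade i → b ∈ S.grade j →
    ∀ (c : L) (lam mu : ℂ),
      mc.mul (lam + mu) (p.mul lam a b) c - p.mul lam a (mc.mul mu b c) =
        sgn i j • (mc.mul (lam + mu) (p.mul mu b a) c - p.mul mu b (mc.mul lam a c))

/-- `(L, S, mc, p)` is a pre-Lie commutative conformal superalgebra. -/
structure IsPreLieComm (S : SuperModule L) (mc p : ConformalProduct L) : Prop where
  commAssoc : IsCommAssoc S mc
  leftSymmetric : IsLeftSymmetric S p
  compat : ∀ (i j : ZMod 2) (a b : L), a ∈ S.grade i → b ∈ S.grade j →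
    ∀ (c : L) (lam mu : ℂ),
      p.mul lam a (mc.mul mu b c) =
        mc.mul (lam + mu) (p.mul lam a b) c + sgn i j • mc.mul mu b (p.mul lam a c)

/-- `(L, S, mc, p)` is a pre-Lie Poisson conformal superalgebra. -/
structure IsPreLiePoisson (S : SuperModule L) (mc p : ConformalProduct L) : Prop where
  commAssoc : IsCommAssoc S mc
  leftSymmetric : IsLeftSymmetric S p
  compat₁ : ∀ (lam mu : ℂ) (a b c : L),
    p.mul (lam + mu) (mc.mul lam a b) c = mc.mul lam a (p.mul mu b c)
  compat₂ : ∀ (i j : ZMod 2) (a b : L), a ∈ S.grade i → b ∈ S.grade j →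
    ∀ (c : L) (lam mu : ℂ),
      mc.mul (lam + mu) (p.mul lam a b) c - p.mul lam a (mc.mul mu b c) =
        sgn i j • (mc.mul (lam + mu) (p.mul mu b a) c - p.mul mu b (mc.mul lam a c))


/-!
Write `A = a ∘_γ [b_δ c]`, `B = b ∘_δ [a_γ c]`, `F = [a_γ b] ∘_{γ+δ} c` and
`G = [(a ∘_γ b)_{γ+δ} c]`. Subtracting the Leibniz rule from the transposed one, and using
commutativity and skew-symmetry in the first slot (where `∂` acts by a scalar), gives
`A = G - F` and `±B = G + F`. A second use of the Leibniz rule, for `c, a, b`, is an identity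
of polynomials in the spectral variable of `c`; substituting the operator `-∂-ν` for it
(legitimate because an `L`-valued polynomial vanishing on `ℂ` has zero coefficients) and
applying skew-symmetry and commutativity yields `G = 3/2 A + 1/2 F`. Hence `±B = 3A`, and by
symmetry `±A = 3B`, so `A = 9A = 0`, and then `F = G = 0`.
Conversely, if the three families vanish, every term of both Leibniz rules vanishes; for
`[a_λ (b ∘_μ c)]` this follows from `[(b ∘_μ c)_ν a] = 0` by skew-symmetry.
-/

theorem sgn_comm (i j : ZMod 2) : sgn i j = sgn j i := by
  rw [sgn, sgn, Nat.mul_comm]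

theorem sgn_mul_self (i j : ZMod 2) : sgn i j * sgn i j = 1 := by
  rw [sgn, ← mul_pow]; norm_num

theorem sgn_smul_sgn_smul {M : Type*} [AddCommGroup M] [Module ℂ M] (i j : ZMod 2) (x : M) :
    sgn i j • sgn i j • x = x := by
  rw [smul_smul, sgn_mul_self, one_smul]

theorem sgn_add_left (i j k : ZMod 2) : sgn (i + j) k = sgn i k * sgn j k := by
  rw [sgn, sgn, sgn, ← pow_add, ← add_mul, ZMod.val_add, neg_one_pow_eq_pow_mod_two,
    Nat.mod_mul_mod, ← neg_one_pow_eq_pow_mod_two]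

theorem eq_zero_of_forall_sum_pow_smul_eq_zero {K M : Type*} [Field K] [Infinite K]
    [AddCommGroup M] [Module K M] {N n : ℕ} {u : ℕ → M}
    (h : ∀ x : K, ∑ k ∈ Finset.range N, x ^ k • u k = 0) (hn : n < N) : u n = 0 := by
  refine (Module.forall_dual_apply_eq_zero_iff K (u n)).1 fun φ => ?_
  set P : K[X] := ∑ k ∈ Finset.range N, monomial k (φ (u k))
  have hP : P = 0 := Polynomial.funext fun x => by
    simpa [P, eval_finsetSum, mul_comm] using congrArg φ (h x)
  simpa [P, finsetSum_coeff, coeff_monomial, hn] using congrArg (coeff · n) hP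

theorem sum_pow_smul_eq_zero_of_forall {K R M : Type*} [Field K] [Infinite K] [Semiring R]
    [AddCommGroup M] [Module K M] [Module R M] {N : ℕ} {u : ℕ → M}
    (h : ∀ x : K, ∑ n ∈ Finset.range N, x ^ n • u n = 0) (p : R) :
    ∑ n ∈ Finset.range N, p ^ n • u n = 0 :=
  Finset.sum_eq_zero fun n hn => by
    rw [eq_zero_of_forall_sum_pow_smul_eq_zero h (Finset.mem_range.1 hn), smul_zero]

section

omit [IsScalarTower ℂ ℂ[X] L]

theorem SuperModule.apply_eq_zero_of_forall_mem_grade (S : SuperModule L) {M : Type*}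
    [AddCommGroup M] [Module ℂ M] (f : L →ₗ[ℂ] M) (h : ∀ i, ∀ x ∈ S.grade i, f x = 0)
    (x : L) : f x = 0 := by
  have hle : ⨆ i, S.grade i ≤ LinearMap.ker f := iSup_le fun i x hx => h i x hx
  rw [S.isInternal.submodule_iSup_eq_top] at hle
  exact hle Submodule.mem_top

namespace ConformalProduct

variable (m : ConformalProduct L)

section

omit [Module ℂ[X] L]

theorem hasFiniteSupport_coeff (a b : L) : (fun n => m.coeff n a b).HasFiniteSupport := by
  obtain ⟨N, hN⟩ := m.coeff_finite a b
  exact (Set.finite_Iio N).subset fun n hn => by_contra fun h => hn (hN n (not_lt.1 h))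

theorem eventually_coeff_eq_zero (a b : L) : ∀ᶠ n in Filter.atTop, m.coeff n a b = 0 :=
  Filter.eventually_atTop.2 (m.coeff_finite a b)

theorem mul_eq_sum {N : ℕ} (lam : ℂ) {a b : L} (h : ∀ n, N ≤ n → m.coeff n a b = 0) :
    m.mul lam a b = ∑ n ∈ Finset.range N, lam ^ n • m.coeff n a b :=
  finsum_eq_sum_of_support_subset _ fun n hn => by
    by_contra h'
    exact hn (show lam ^ n • _ = 0 by rw [h n (by simpa using h'), smul_zero])

theorem mul_add_left (lam : ℂ) (a b c : L) :
    m.mul lam (a + b) c = m.mul lam a c + m.mul lam b c := by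
  simp only [mul, map_add, LinearMap.add_apply, smul_add]
  exact finsum_add_distrib ((m.hasFiniteSupport_coeff a c).smul_right _)
    ((m.hasFiniteSupport_coeff b c).smul_right _)

theorem mul_add_right (lam : ℂ) (a b c : L) :
    m.mul lam a (b + c) = m.mul lam a b + m.mul lam a c := by
  simp only [mul, map_add, smul_add]
  exact finsum_add_distrib ((m.hasFiniteSupport_coeff a b).smul_right _)
    ((m.hasFiniteSupport_coeff a c).smul_right _)

theorem mul_smul_left (lam c : ℂ) (a b : L) : m.mul lam (c • a) b = c • m.mul lam a b := by
  simp only [mul, map_smul, LinearMap.smul_apply, smul_comm _ c]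
  exact (smul_finsum' c ((m.hasFiniteSupport_coeff a b).smul_right _)).symm

theorem mul_smul_right (lam c : ℂ) (a b : L) : m.mul lam a (c • b) = c • m.mul lam a b := by
  simp only [mul, map_smul, smul_comm _ c]
  exact (smul_finsum' c ((m.hasFiniteSupport_coeff a b).smul_right _)).symm

def mulₗ (lam : ℂ) : L →ₗ[ℂ] L →ₗ[ℂ] L :=
  LinearMap.mk₂ ℂ (m.mul lam) (m.mul_add_left lam) (m.mul_smul_left lam) (m.mul_add_right lam)
    (m.mul_smul_right lam)

theorem mul_neg_left (lam : ℂ) (a b : L) : m.mul lam (-a) b = -m.mul lam a b :=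
  map_neg ((m.mulₗ lam).flip b) a

theorem mul_neg_right (lam : ℂ) (a b : L) : m.mul lam a (-b) = -m.mul lam a b :=
  map_neg (m.mulₗ lam a) b

theorem mul_sum_left {ι : Type*} (lam : ℂ) (s : Finset ι) (f : ι → L) (b : L) :
    m.mul lam (∑ i ∈ s, f i) b = ∑ i ∈ s, m.mul lam (f i) b :=
  map_sum ((m.mulₗ lam).flip b) f s

theorem mul_sum_right {ι : Type*} (lam : ℂ) (a : L) (s : Finset ι) (f : ι → L) :
    m.mul lam a (∑ i ∈ s, f i) = ∑ i ∈ s, m.mul lam a (f i) :=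
  map_sum (m.mulₗ lam a) f s

end

theorem cmul_eq_sum {N : ℕ} (lam : ℂ) {a b : L} (h : ∀ n, N ≤ n → m.coeff n a b = 0) :
    m.cmul lam a b = ∑ n ∈ Finset.range N, (-(X + C lam)) ^ n • m.coeff n a b :=
  finsum_eq_sum_of_support_subset _ fun n hn => by
    by_contra h'
    exact hn (show (-(X + C lam)) ^ n • _ = 0 by rw [h n (by simpa using h'), smul_zero])

theorem cmul_eq_zero_of_forall_mul_eq_zero {a b : L} (h : ∀ lam, m.mul lam a b = 0) (lam : ℂ) :
    m.cmul lam a b = 0 := by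
  obtain ⟨N, hN⟩ := m.coeff_finite a b
  rw [m.cmul_eq_sum lam hN]
  exact sum_pow_smul_eq_zero_of_forall (fun lam => (m.mul_eq_sum lam hN).symm.trans (h lam)) _

end ConformalProduct

variable {S : SuperModule L} {m br : ConformalProduct L} {i j : ZMod 2} {a b : L}

theorem IsLambdaProduct.mul_mem (hm : IsLambdaProduct S m) (ha : a ∈ S.grade i)
    (hb : b ∈ S.grade j) (lam : ℂ) : m.mul lam a b ∈ S.grade (i + j) := by
  obtain ⟨N, hN⟩ := m.coeff_finite a b
  rw [m.mul_eq_sum lam hN]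
  exact Submodule.sum_mem _ fun n _ => Submodule.smul_mem _ _ (hm.even i j a b ha hb n)

theorem IsLie.mul_eq_zero_of_forall_mul_swap_eq_zero (hbr : IsLie S br) (ha : a ∈ S.grade i)
    (hb : b ∈ S.grade j) (h : ∀ nu, br.mul nu b a = 0) (lam : ℂ) : br.mul lam a b = 0 := by
  rw [hbr.skew i j a b ha hb, br.cmul_eq_zero_of_forall_mul_eq_zero h, smul_zero, neg_zero]

def MixedProductsVanish (S : SuperModule L) (m br : ConformalProduct L) : Prop :=
  ∀ (i j k : ZMod 2) (a b c : L), a ∈ S.grade i → b ∈ S.grade j → c ∈ S.grade k →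
    ∀ lam mu : ℂ,
      m.mul lam a (br.mul mu b c) = 0 ∧
      m.mul mu (br.mul (mu - lam) b a) c = 0 ∧
      br.mul (lam + mu) (m.mul lam a b) c = 0

namespace MixedProductsVanish

variable (h : MixedProductsVanish S m br)
include h

theorem mul_bracket_right_eq_zero (ha : a ∈ S.grade i) (hb : b ∈ S.grade j) (c : L)
    (lam mu : ℂ) : m.mul lam a (br.mul mu b c) = 0 :=
  S.apply_eq_zero_of_forall_mem_grade ((m.mulₗ lam a).comp (br.mulₗ mu b))
    (fun k c hc => (h _ _ k _ _ c ha hb hc lam mu).1) c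

theorem mul_bracket_left_eq_zero (ha : a ∈ S.grade i) (hb : b ∈ S.grade j) (c : L)
    (gam nu : ℂ) : m.mul nu (br.mul gam a b) c = 0 :=
  S.apply_eq_zero_of_forall_mem_grade (m.mulₗ nu (br.mul gam a b)) (fun k c hc => by
    have h' := (h _ _ k _ _ c hb ha hc (nu - gam) nu).2.1
    rwa [sub_sub_cancel] at h') c

theorem bracket_mul_left_eq_zero (ha : a ∈ S.grade i) (hb : b ∈ S.grade j) (c : L)
    (lam nu : ℂ) : br.mul nu (m.mul lam a b) c = 0 :=
  S.apply_eq_zero_of_forall_mem_grade (br.mulₗ nu (m.mul lam a b)) (fun k c hc => by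
    have h' := (h _ _ k _ _ c ha hb hc lam (nu - lam)).2.2
    rwa [add_sub_cancel] at h') c

theorem bracket_mul_right_eq_zero (hm : IsLambdaProduct S m) (hbr : IsLie S br)
    (ha : a ∈ S.grade i) (hb : b ∈ S.grade j) (c : L) (lam mu : ℂ) :
    br.mul lam a (m.mul mu b c) = 0 :=
  S.apply_eq_zero_of_forall_mem_grade ((br.mulₗ lam a).comp (m.mulₗ mu b))
    (fun _ _ hc => hbr.mul_eq_zero_of_forall_mul_swap_eq_zero ha (hm.mul_mem hb hc mu)
      (fun nu => h.bracket_mul_left_eq_zero hb hc a mu nu) lam) c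

theorem isPCSA (hm : IsCommAssoc S m) (hbr : IsLie S br) : IsPCSA S m br :=
  ⟨hm, hbr, fun _ _ _ _ ha hb _ _ _ => by
    rw [h.bracket_mul_right_eq_zero hm.toIsLambdaProduct hbr ha hb,
      h.mul_bracket_left_eq_zero ha hb, h.mul_bracket_right_eq_zero hb ha, smul_zero, add_zero]⟩

theorem isTPCSA (hm : IsCommAssoc S m) (hbr : IsLie S br) : IsTPCSA S m br :=
  ⟨hm, hbr, fun _ _ _ _ ha hb _ _ _ => by
    rw [h.mul_bracket_right_eq_zero ha hb, h.bracket_mul_left_eq_zero ha hb,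
      h.bracket_mul_right_eq_zero hm.toIsLambdaProduct hbr hb ha, smul_zero, smul_zero, add_zero]⟩

end MixedProductsVanish

end

theorem C_smul_eq (c : ℂ) (x : L) : (C c : ℂ[X]) • x = c • x := by
  rw [← algebraMap_eq, algebraMap_smul]

namespace IsLambdaProduct

variable {S : SuperModule L} {m : ConformalProduct L} (hm : IsLambdaProduct S m)
include hm

theorem mul_poly_smul_left (p : ℂ[X]) (lam : ℂ) (a b : L) :
    m.mul lam (p • a) b = p.eval (-lam) • m.mul lam a b := by
  induction p using Polynomial.induction_on with
  | C c => rw [eval_C, C_smul_eq, m.mul_smul_left]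
  | add p q hp hq => rw [add_smul, m.mul_add_left, hp, hq, eval_add, add_smul]
  | monomial n c ih =>
    rw [show C c * X ^ (n + 1) = X * (C c * X ^ n) by ring, mul_smul, hm.sesq_left, ih, smul_smul]
    simp only [eval_mul, eval_X]

theorem mul_poly_smul_right (p : ℂ[X]) (lam : ℂ) (a b : L) :
    m.mul lam a (p • b) = p.comp (X + C lam) • m.mul lam a b := by
  induction p using Polynomial.induction_on with
  | C c => rw [C_comp, C_smul_eq, C_smul_eq, m.mul_smul_right]
  | add p q hp hq => rw [add_smul, m.mul_add_right, hp, hq, add_comp, add_smul]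
  | monomial n c ih =>
    rw [show C c * X ^ (n + 1) = X * (C c * X ^ n) by ring, mul_smul, hm.sesq_right, ih,
      ← C_smul_eq lam, ← add_smul, smul_smul]
    simp only [mul_comp, X_comp]

theorem mul_cmul_left {p : ConformalProduct L} (lam nu : ℂ) (a b c : L) :
    m.mul nu (p.cmul lam a b) c = m.mul nu (p.mul (nu - lam) a b) c := by
  obtain ⟨N, hN⟩ := p.coeff_finite a b
  rw [p.cmul_eq_sum lam hN, p.mul_eq_sum _ hN, m.mul_sum_left, m.mul_sum_left]
  refine Finset.sum_congr rfl fun n _ => ?_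
  rw [hm.mul_poly_smul_left, m.mul_smul_left]
  simp only [eval_pow, eval_neg, eval_add, eval_X, eval_C]
  ring_nf

theorem mul_cmul_right {p : ConformalProduct L} {N : ℕ} (lam mu : ℂ) (a : L) {b c : L}
    (h : ∀ n, N ≤ n → p.coeff n b c = 0) :
    m.mul lam a (p.cmul mu b c) =
      ∑ n ∈ Finset.range N, (-(X + C (lam + mu))) ^ n • m.mul lam a (p.coeff n b c) := by
  rw [p.cmul_eq_sum mu h, m.mul_sum_right]
  refine Finset.sum_congr rfl fun n _ => ?_
  rw [hm.mul_poly_smul_right]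
  simp only [pow_comp, neg_comp, add_comp, X_comp, C_comp, C_add]
  ring_nf

end IsLambdaProduct

section PoissonTransposedPoisson

variable {S : SuperModule L} {m br : ConformalProduct L} {i j k : ZMod 2} {a b c : L}

theorem IsCommAssoc.bracket_mul_left_comm (hm : IsCommAssoc S m) (hbr : IsLie S br)
    (ha : a ∈ S.grade i) (hb : b ∈ S.grade j) (c : L) (lam nu : ℂ) :
    br.mul nu (m.mul lam a b) c = sgn i j • br.mul nu (m.mul (nu - lam) b a) c := by
  rw [hm.comm i j a b ha hb, br.mul_smul_left, hbr.mul_cmul_left]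

theorem IsLie.mul_bracket_left_skew (hm : IsCommAssoc S m) (hbr : IsLie S br)
    (ha : a ∈ S.grade i) (hb : b ∈ S.grade j) (c : L) (gam nu : ℂ) :
    m.mul nu (br.mul gam a b) c = -(sgn i j • m.mul nu (br.mul (nu - gam) b a) c) := by
  rw [hbr.skew i j a b ha hb, m.mul_neg_left, m.mul_smul_left, hm.mul_cmul_left]

namespace IsPCSA

variable (hpc : IsPCSA S m br) (htp : IsTPCSA S m br)
include hpc htp

omit [IsScalarTower ℂ ℂ[X] L] in
theorem mul_bracket_right_eq_add (ha : a ∈ S.grade i) (hb : b ∈ S.grade j) (c : L)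
    (lam mu : ℂ) :
    m.mul lam a (br.mul mu b c) =
      br.mul (lam + mu) (m.mul lam a b) c + sgn i j • m.mul (lam + mu) (br.mul mu b a) c := by
  have h := htp.transposedLeibniz i j a b ha hb c lam mu
  rw [hpc.leibniz j i b a hb ha c mu lam, smul_add, sgn_comm j i, sgn_smul_sgn_smul,
    add_comm mu lam] at h
  linear_combination (norm := module) h

theorem mul_bracket_right_eq_sub (ha : a ∈ S.grade i) (hb : b ∈ S.grade j) (c : L)
    (gam del : ℂ) :
    m.mul gam a (br.mul del b c) =
      br.mul (gam + del) (m.mul gam a b) c - m.mul (gam + del) (br.mul gam a b) c := by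
  rw [hpc.mul_bracket_right_eq_add htp ha hb, hpc.lie.mul_bracket_left_skew hpc.commAssoc hb ha,
    add_sub_cancel_right, smul_neg, sgn_comm j i, sgn_smul_sgn_smul, sub_eq_add_neg]

theorem sgn_smul_mul_bracket_right_eq_add (ha : a ∈ S.grade i) (hb : b ∈ S.grade j) (c : L)
    (gam del : ℂ) :
    sgn i j • m.mul del b (br.mul gam a c) =
      br.mul (gam + del) (m.mul gam a b) c + m.mul (gam + del) (br.mul gam a b) c := by
  rw [hpc.mul_bracket_right_eq_add htp hb ha, hpc.commAssoc.bracket_mul_left_comm hpc.lie ha hb,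
    add_comm del gam, add_sub_cancel_left, smul_add, sgn_comm j i, sgn_smul_sgn_smul]

theorem bracket_mul_right_eq (hc : c ∈ S.grade k) (ha : a ∈ S.grade i) (b : L) (gam lam : ℂ) :
    br.mul gam c (m.mul lam a b) = ((3 / 2 : ℂ) * sgn k i) • m.mul lam a (br.mul gam c b)
      - (1 / 2 : ℂ) • m.mul gam c (br.mul lam a b) := by
  linear_combination (norm := module) hpc.leibniz k i c a hc ha b gam lam
    - (1 / 2 : ℂ) • hpc.sgn_smul_mul_bracket_right_eq_add htp hc ha b gam lam
    + (1 / 2 : ℂ) • hpc.mul_bracket_right_eq_sub htp hc ha b gam lam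

theorem bracket_mul_left_eq (ha : a ∈ S.grade i) (hb : b ∈ S.grade j) (hc : c ∈ S.grade k)
    (lam nu : ℂ) :
    br.mul nu (m.mul lam a b) c =
      (3 / 2 : ℂ) • m.mul lam a (br.mul (nu - lam) b c)
        + (1 / 2 : ℂ) • m.mul nu (br.mul lam a b) c := by
  have hm := hpc.commAssoc
  have hbr := hpc.lie
  obtain ⟨N, hN⟩ := Filter.eventually_atTop.1
    ((br.eventually_coeff_eq_zero c (m.mul lam a b)).and
      ((br.eventually_coeff_eq_zero c b).and (m.eventually_coeff_eq_zero c (br.mul lam a b))))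
  set u : ℕ → L := fun n => br.coeff n c (m.mul lam a b)
    - ((3 / 2 : ℂ) * sgn k i) • m.mul lam a (br.coeff n c b)
    + (1 / 2 : ℂ) • m.coeff n c (br.mul lam a b)
  have hu : ∀ p : ℂ[X], ∑ n ∈ Finset.range N, p ^ n • u n =
      ∑ n ∈ Finset.range N, p ^ n • br.coeff n c (m.mul lam a b)
        - ((3 / 2 : ℂ) * sgn k i) •
            ∑ n ∈ Finset.range N, p ^ n • m.mul lam a (br.coeff n c b)
        + (1 / 2 : ℂ) • ∑ n ∈ Finset.range N, p ^ n • m.coeff n c (br.mul lam a b) := by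
    intro p
    simp only [Finset.smul_sum, ← Finset.sum_sub_distrib, ← Finset.sum_add_distrib]
    refine Finset.sum_congr rfl fun n _ => ?_
    simp only [u, smul_add, smul_sub, smul_comm (p ^ n)]
  have hscalar : ∀ gam : ℂ, ∑ n ∈ Finset.range N, gam ^ n • u n = 0 := by
    intro gam
    have hV : m.mul lam a (br.mul gam c b) =
        ∑ n ∈ Finset.range N, gam ^ n • m.mul lam a (br.coeff n c b) := by
      rw [br.mul_eq_sum gam fun n hn => (hN n hn).2.1, m.mul_sum_right]
      simp only [m.mul_smul_right]
    have h := hu (C gam)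
    simp only [← C_pow, C_smul_eq] at h
    rw [h, ← hV, ← br.mul_eq_sum gam fun n hn => (hN n hn).1,
      ← m.mul_eq_sum gam fun n hn => (hN n hn).2.2, hpc.bracket_mul_right_eq htp hc ha]
    abel
  -- `u` has zero coefficients, so the operator `-∂-ν` may be substituted for `γ`.
  have hsub := sum_pow_smul_eq_zero_of_forall hscalar (-(X + C nu))
  rw [hu, ← br.cmul_eq_sum nu fun n hn => (hN n hn).1,
    ← m.cmul_eq_sum nu fun n hn => (hN n hn).2.2,
    ← add_sub_cancel lam nu, ← hm.mul_cmul_right lam (nu - lam) a fun n hn => (hN n hn).2.1,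
    add_sub_cancel, sgn_comm k i] at hsub
  rw [hbr.skew _ _ _ _ (hm.mul_mem ha hb lam) hc, hbr.skew _ _ _ _ hb hc, m.mul_neg_right,
    m.mul_smul_right, hm.comm _ _ _ _ (hbr.mul_mem ha hb lam) hc, sgn_add_left]
  linear_combination (norm := module) (-(sgn i k * sgn j k)) • hsub
    - (sgn_mul_self i k) • ((3 / 2 * sgn j k : ℂ) • m.mul lam a (br.cmul (nu - lam) c b))

theorem sgn_smul_mul_bracket_right_eq_three_smul (ha : a ∈ S.grade i) (hb : b ∈ S.grade j)
    (hc : c ∈ S.grade k) (gam del : ℂ) :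
    sgn i j • m.mul del b (br.mul gam a c) = (3 : ℂ) • m.mul gam a (br.mul del b c) := by
  have hG := hpc.bracket_mul_left_eq htp ha hb hc gam (gam + del)
  rw [add_sub_cancel_left] at hG
  linear_combination (norm := module) hpc.sgn_smul_mul_bracket_right_eq_add htp ha hb c gam del
    + (4 : ℂ) • hG + (3 : ℂ) • hpc.mul_bracket_right_eq_sub htp ha hb c gam del

theorem mul_bracket_right_eq_zero (ha : a ∈ S.grade i) (hb : b ∈ S.grade j)
    (hc : c ∈ S.grade k) (lam mu : ℂ) : m.mul lam a (br.mul mu b c) = 0 := by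
  have h := congrArg (sgn i j • ·)
    (hpc.sgn_smul_mul_bracket_right_eq_three_smul htp hb ha hc mu lam)
  simp only [sgn_comm j i, sgn_smul_sgn_smul, smul_comm (sgn i j) (3 : ℂ),
    hpc.sgn_smul_mul_bracket_right_eq_three_smul htp ha hb hc lam mu] at h
  have h8 : (8 : ℂ) • m.mul lam a (br.mul mu b c) = 0 := by
    linear_combination (norm := module) -h
  exact (smul_eq_zero.1 h8).resolve_left (by norm_num)

theorem mul_bracket_left_eq_zero (ha : a ∈ S.grade i) (hb : b ∈ S.grade j)
    (hc : c ∈ S.grade k) (gam nu : ℂ) : m.mul nu (br.mul gam a b) c = 0 := by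
  have hA := hpc.mul_bracket_right_eq_sub htp ha hb c gam (nu - gam)
  have hsB := hpc.sgn_smul_mul_bracket_right_eq_add htp ha hb c gam (nu - gam)
  rw [hpc.mul_bracket_right_eq_zero htp ha hb hc, add_sub_cancel] at hA
  rw [hpc.mul_bracket_right_eq_zero htp hb ha hc, smul_zero, add_sub_cancel] at hsB
  linear_combination (norm := module) (1 / 2 : ℂ) • hA - (1 / 2 : ℂ) • hsB

theorem bracket_mul_left_eq_zero (ha : a ∈ S.grade i) (hb : b ∈ S.grade j)
    (hc : c ∈ S.grade k) (lam nu : ℂ) : br.mul nu (m.mul lam a b) c = 0 := by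
  have hA := hpc.mul_bracket_right_eq_sub htp ha hb c lam (nu - lam)
  have hsB := hpc.sgn_smul_mul_bracket_right_eq_add htp ha hb c lam (nu - lam)
  rw [hpc.mul_bracket_right_eq_zero htp ha hb hc, add_sub_cancel] at hA
  rw [hpc.mul_bracket_right_eq_zero htp hb ha hc, smul_zero, add_sub_cancel] at hsB
  linear_combination (norm := module) -(1 / 2 : ℂ) • hA - (1 / 2 : ℂ) • hsB

end IsPCSA

theorem IsPCSA.mixedProductsVanish (hpc : IsPCSA S m br) (htp : IsTPCSA S m br) :
    MixedProductsVanish S m br := fun _ _ _ _ _ _ ha hb hc lam mu =>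
  ⟨hpc.mul_bracket_right_eq_zero htp ha hb hc lam mu,
    hpc.mul_bracket_left_eq_zero htp hb ha hc _ _, hpc.bracket_mul_left_eq_zero htp ha hb hc _ _⟩

end PoissonTransposedPoisson

/-- a commutative associative conformal superalgebra and a Lie conformal
superalgebra on the same `ℤ₂`-graded `ℂ[∂]`-module form both a Poisson conformal
superalgebra and a transposed Poisson conformal superalgebra if and only if
`a ∘_λ [b_μ c] = [b_{μ-λ} a] ∘_μ c = [(a ∘_λ b)_{λ+μ} c] = 0` for all homogeneous `a, b, c`. -/
theorem statement_9 (S : SuperModule L) (m br : ConformalProduct L)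
    (hm : IsCommAssoc S m) (hbr : IsLie S br) :
    (IsPCSA S m br ∧ IsTPCSA S m br) ↔
      ∀ (i j k : ZMod 2) (a b c : L), a ∈ S.grade i → b ∈ S.grade j → c ∈ S.grade k →
        ∀ lam mu : ℂ,
          m.mul lam a (br.mul mu b c) = 0 ∧
          m.mul mu (br.mul (mu - lam) b a) c = 0 ∧
          br.mul (lam + mu) (m.mul lam a b) c = 0 :=
  ⟨fun ⟨hpc, htp⟩ => hpc.mixedProductsVanish htp,
    fun h => ⟨MixedProductsVanish.isPCSA h hm hbr, MixedProductsVanish.isTPCSA h hm hbr⟩⟩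

end TPCSAFormal
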